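/- Let n ≥ 4, let A ∈ ℝ^{2n×n} be a pure common lines matrix associated to rotations R⁽¹⁾,…,R⁽ⁿ⁾ ∈ SO(3), such that all 2×2 determinants det(a_{ij} a_{ik}) for distinct i,j,k are nonzero. Let λ_{ij} (i ≠ j) be nonzero reals with λ_{ij} = λ_{ji} and λ_{i1} = λ_{1j} = 1 for all i,j ≥ 2. Suppose the matrix B obtained from A by scaling block a_{ij} by λ_{ij} has rank 3. Then λ_{ij} = λ_{ik} for all distinct i, j, k ∈ {2,…,n}. -/

import Mathlib

open Matrix

/-!
The `4 × 4` minor of `B` on the rows of blocks `i, j` and the columns `i, j, k, l` has zeros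
where the diagonal blocks `a_{ii}, a_{jj}` sit, so its Laplace expansion along the two block
rows has only two terms. Using `det(a_{ji} a_{jk}) = -det(a_{ij} a_{ik})` (a triple product
of third rows) it equals
`λ_{ij} λ_{ji} det(a_{ij} a_{ik}) det(a_{ij} a_{il}) (λ_{jk} λ_{il} - λ_{ik} λ_{jl})`.
Rank `3` forces it to vanish, so `λ_{ik} λ_{jl} = λ_{jk} λ_{il}`; taking `l = 1` gives
`λ_{ik} = λ_{jk}`, and symmetry of `λ` turns column equalities into row equalities.
-/

/-- The common-line representative `a_{pq}` of two rotations `P, Q ∈ SO(3)`. -/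
def aVec (P Q : Matrix (Fin 3) (Fin 3) ℝ) : Fin 2 → ℝ :=
  ![P 0 ⬝ᵥ crossProduct (P 2) (Q 2), P 1 ⬝ᵥ crossProduct (P 2) (Q 2)]

/-- Determinant of the `2×2` matrix with columns `u, v`. -/
def det2 (u v : Fin 2 → ℝ) : ℝ := u 0 * v 1 - u 1 * v 0

theorem Matrix.det_submatrix_eq_zero_of_rank_lt {K m n ι : Type*} [Field K] [Fintype n]
    [Fintype ι] [DecidableEq ι] (A : Matrix m n K) (r : ι → m) (c : ι → n)
    (h : A.rank < Fintype.card ι) : (A.submatrix r c).det = 0 := by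
  by_contra hdet
  have hfull := rank_of_isUnit _ ((isUnit_iff_isUnit_det _).mpr (Ne.isUnit hdet))
  exact (rank_submatrix_le A r c).not_gt (hfull ▸ h)

lemma det2_aVec (P Q S : Matrix (Fin 3) (Fin 3) ℝ) :
    det2 (aVec P Q) (aVec P S) = P.det * (P 2 ⬝ᵥ Q 2 ⨯₃ S 2) := by
  simp [det2, aVec, crossProduct, dotProduct, Fin.sum_univ_three, det_fin_three]
  ring

lemma det2_aVec_swap {P Q : Matrix (Fin 3) (Fin 3) ℝ} (hP : P.det = 1) (hQ : Q.det = 1)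
    (S : Matrix (Fin 3) (Fin 3) ℝ) :
    det2 (aVec Q P) (aVec Q S) = -det2 (aVec P Q) (aVec P S) := by
  rw [det2_aVec, det2_aVec, hP, hQ, one_mul, one_mul, triple_product_permutation,
    ← cross_anticomm, dotProduct_neg]

lemma det_zero_diag_blocks (u v w x y z : Fin 2 → ℝ) :
    !![0, u 0, v 0, w 0; 0, u 1, v 1, w 1; x 0, 0, y 0, z 0; x 1, 0, y 1, z 1].det =
      det2 u v * det2 x z - det2 u w * det2 x y := by
  simp [det_succ_column_zero, Fin.sum_univ_succ, det2, Fin.succAbove]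
  ring

lemma det2_smul (c d : ℝ) (u v : Fin 2 → ℝ) :
    det2 (c • u) (d • v) = c * d * det2 u v := by
  simp only [det2, Pi.smul_apply, smul_eq_mul]
  ring

theorem lam_mul_lam_eq_of_rank_le_three {n : ℕ} {R : Fin n → Matrix (Fin 3) (Fin 3) ℝ}
    (hR : ∀ i, (R i).det = 1) {lam : Fin n → Fin n → ℝ}
    {B : Matrix (Fin n × Fin 2) (Fin n) ℝ}
    (hB : ∀ (p : Fin n × Fin 2) (j : Fin n),
      B p j = if p.1 = j then 0 else lam p.1 j * aVec (R p.1) (R j) p.2)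
    (hrank : B.rank ≤ 3) {i j k l : Fin n} (hij : i ≠ j) (hik : i ≠ k) (hil : i ≠ l)
    (hjk : j ≠ k) (hjl : j ≠ l) (hij₀ : lam i j ≠ 0) (hji₀ : lam j i ≠ 0)
    (hk : det2 (aVec (R i) (R j)) (aVec (R i) (R k)) ≠ 0)
    (hl : det2 (aVec (R i) (R j)) (aVec (R i) (R l)) ≠ 0) :
    lam i k * lam j l = lam j k * lam i l := by
  set a : Fin n → Fin n → Fin 2 → ℝ := fun p q => lam p q • aVec (R p) (R q) with ha
  have hminor : B.submatrix ![(i, 0), (i, 1), (j, 0), (j, 1)] ![i, j, k, l] =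
      !![0, a i j 0, a i k 0, a i l 0; 0, a i j 1, a i k 1, a i l 1;
        a j i 0, 0, a j k 0, a j l 0; a j i 1, 0, a j k 1, a j l 1] := by
    ext r c
    fin_cases r <;> fin_cases c <;> simp [hB, ha, hij, hik, hil, hjk, hjl, hij.symm]
  have hzero := det_submatrix_eq_zero_of_rank_lt B ![(i, 0), (i, 1), (j, 0), (j, 1)]
    ![i, j, k, l] (by simpa using hrank.trans_lt (by norm_num : (3 : ℕ) < 4))
  rw [hminor, det_zero_diag_blocks] at hzero
  simp only [ha, det2_smul, det2_aVec_swap (hR i) (hR j)] at hzero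
  set Dk := det2 (aVec (R i) (R j)) (aVec (R i) (R k))
  set Dl := det2 (aVec (R i) (R j)) (aVec (R i) (R l))
  have hfactor : lam i j * lam j i * Dk * Dl * (lam j k * lam i l - lam i k * lam j l) = 0 := by
    linear_combination hzero
  have hne : lam i j * lam j i * Dk * Dl ≠ 0 := by positivity
  linarith [(mul_eq_zero.mp hfactor).resolve_left hne]

/-- Let `n ≥ 4` and `A` the pure common lines matrix of rotations
`R⁽¹⁾,…,R⁽ⁿ⁾ ∈ SO(3)` with all determinants `det(a_{ij} a_{ik})` nonzero. Let
`λ_{ij}` be nonzero symmetric scales with `λ_{i1} = λ_{1j} = 1` (index `0`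
playing the role of `1`), and suppose the blockwise-scaled matrix `B` with
blocks `λ_{ij}a_{ij}` has rank `3`. Then `λ_{ij} = λ_{ik}` for all distinct
`i, j, k ≥ 2`. -/
theorem stmt12 {n : ℕ} (hn : 4 ≤ n) (R : Fin n → Matrix (Fin 3) (Fin 3) ℝ)
    (hR : ∀ i, R i ∈ Matrix.specialOrthogonalGroup (Fin 3) ℝ)
    (hdet : ∀ i j k : Fin n, i ≠ j → i ≠ k → j ≠ k →
      det2 (aVec (R i) (R j)) (aVec (R i) (R k)) ≠ 0)
    (lam : Fin n → Fin n → ℝ)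
    (hlam0 : ∀ i j, i ≠ j → lam i j ≠ 0)
    (hlamsym : ∀ i j, lam i j = lam j i)
    (hlam1 : ∀ i : Fin n, i ≠ (⟨0, by omega⟩ : Fin n) → lam i ⟨0, by omega⟩ = 1 ∧ lam ⟨0, by omega⟩ i = 1)
    (B : Matrix (Fin n × Fin 2) (Fin n) ℝ)
    (hB : ∀ (p : Fin n × Fin 2) (j : Fin n),
      B p j = if p.1 = j then 0 else lam p.1 j * aVec (R p.1) (R j) p.2)
    (hrank : B.rank = 3) :
    ∀ i j k : Fin n, i ≠ (⟨0, by omega⟩ : Fin n) → j ≠ (⟨0, by omega⟩ : Fin n) → k ≠ (⟨0, by omega⟩ : Fin n) → i ≠ j → i ≠ k → j ≠ k →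
      lam i j = lam i k := by
  set o : Fin n := ⟨0, by omega⟩
  have hR₁ (i : Fin n) : (R i).det = 1 := (mem_specialOrthogonalGroup_iff.mp (hR i)).2
  have hcol (p q r : Fin n) (hp : p ≠ o) (hq : q ≠ o) (hpq : p ≠ q) (hpr : p ≠ r)
      (hqr : q ≠ r) : lam p r = lam q r := by
    have h := lam_mul_lam_eq_of_rank_le_three hR₁ hB hrank.le hpq hpr hp hqr hq
      (hlam0 p q hpq) (hlam0 q p hpq.symm) (hdet p q r hpq hpr hqr) (hdet p q o hpq hp hq)
    rwa [(hlam1 p hp).1, (hlam1 q hq).1, mul_one, mul_one] at h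
  intro i j k hi hj hk hij hik hjk
  calc lam i j = lam k j := hcol i k j hi hk hik hij hjk.symm
    _ = lam j k := hlamsym k j
    _ = lam i k := hcol j i k hj hi hij.symm hjk hik
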